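/- More generally, if z = x(1 - g x^h) then A_h(g z^h) = (1 - g x^h)^{-1} and z·(A_h(g z^h) - 1) = g x^{h+1}, as identities of formal power series in x over the parameter g. -/

import Mathlib

/-- Composition `f ∘ g` of formal power series, valid when `g` has zero
constant term (in that case `coeff n (g^k) = 0` for `k > n`). -/
noncomputable def pscomp {R : Type*} [CommSemiring R] (f g : PowerSeries R) :
    PowerSeries R :=
  PowerSeries.mk fun n =>
    ∑ k ∈ Finset.range (n + 1), PowerSeries.coeff k f * PowerSeries.coeff n (g ^ k)

/-- The generating function of the generalized Catalan numbers, with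
coefficients viewed in `ℚ[g]`. -/
noncomputable def genCatalanGF (h : ℕ) : PowerSeries (Polynomial ℚ) :=
  PowerSeries.mk fun n =>
    Polynomial.C ((1 / ((h : ℚ) * n + 1)) * (Nat.choose ((h + 1) * n) n : ℚ))

/-!
With `t = g x^h` one has `g z^h = t (1 - t)^h`, so both identities follow by substituting `t`
into `A_h(t (1 - t)^h) = (1 - t)⁻¹`. Comparing coefficients of `t^m`, this is the alternating
identity `∑_{i+j=m} (-1)^j C_h(i) binom(h i, j) = 1` for the Fuss–Catalan numbers `C_h(i)`.
It is the case `x = 1`, `y = -h m - 1`, `a = h + 1` of the Rothe–Hagen convolution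
`∑_{i+j=m} x/(x+a i) binom(x+a i, i) binom(y+a j, j) = binom(x+y+a m, m)`, which for natural `x`
follows by induction on `m` and `x` from Pascal's rule.
-/

open PowerSeries

namespace Ring

variable {R : Type*} [CommRing R] [BinomialRing R]

theorem choose_succ_right_eq (r : R) (k : ℕ) :
    choose r (k + 1) * (k + 1) = choose r k * (r - k) := by
  have h := choose_smul_choose r (Nat.le_add_right k 1)
  rw [Nat.choose_succ_self_right, Nat.add_sub_cancel_left, choose_one_right, nsmul_eq_mul] at h
  push_cast at h
  linear_combination h

theorem choose_natCast_sub_succ (c j : ℕ) :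
    choose ((j : R) - (c + 1)) j = (-1) ^ j * c.choose j := by
  rw [show (j : R) - (c + 1) = -((c : R) + 1 - j) by ring, choose_neg,
    show (c : R) + 1 - j + j - 1 = c by ring, choose_natCast, Units.smul_def,
    Int.coe_negOnePow_natCast, zsmul_eq_mul, Int.cast_pow, Int.cast_neg, Int.cast_one]

end Ring

/-- `x / (x + a k) * binom(x + a k, k)`, written without the division by `x + a k`. -/
noncomputable def rotheCoeff (a : ℕ) : ℕ → ℚ → ℚ
  | 0, _ => 1
  | k + 1, x => x / (k + 1) * Ring.choose (x + a * (k + 1) - 1) k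

@[simp]
theorem rotheCoeff_zero (a : ℕ) (x : ℚ) : rotheCoeff a 0 x = 1 := rfl

@[simp]
theorem rotheCoeff_succ_at_zero (a k : ℕ) : rotheCoeff a (k + 1) 0 = 0 := by
  simp [rotheCoeff]

theorem rotheCoeff_succ_add_one (a k : ℕ) (x : ℚ) :
    rotheCoeff a (k + 1) (x + 1) = rotheCoeff a (k + 1) x + rotheCoeff a k (x + a) := by
  cases k with
  | zero => simp [rotheCoeff]
  | succ k =>
    obtain ⟨N, hN⟩ : ∃ N : ℚ, N = x + a * (k + 2) - 1 := ⟨_, rfl⟩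
    have hN₁ : x + 1 + a * ((k + 1 : ℕ) + 1) - 1 = N + 1 := by rw [hN]; push_cast; ring
    have hN₂ : x + a * ((k + 1 : ℕ) + 1) - 1 = N := by rw [hN]; push_cast; ring
    have hN₃ : x + a + a * ((k : ℕ) + 1) - 1 = N := by rw [hN]; ring
    simp only [rotheCoeff, hN₁, hN₂, hN₃, Ring.choose_succ_succ]
    have hratio := Ring.choose_succ_right_eq N k
    field_simp
    push_cast at hratio ⊢
    linear_combination hratio + Ring.choose N k * hN

open Finset in
theorem sum_antidiagonal_rotheCoeff_mul_choose (a m x : ℕ) (y : ℚ) :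
    ∑ p ∈ antidiagonal m, rotheCoeff a p.1 x * Ring.choose (y + a * p.2) p.2 =
      Ring.choose (x + y + a * m) m := by
  induction m generalizing x with
  | zero => simp
  | succ m ihm =>
    induction x with
    | zero => simp [Nat.sum_antidiagonal_succ]
    | succ x ihx =>
      have hshift := ihm (x + a)
      rw [Nat.sum_antidiagonal_succ] at ihx ⊢
      simp only [Nat.cast_add, Nat.cast_one, rotheCoeff_zero, one_mul, rotheCoeff_succ_add_one,
        add_mul, sum_add_distrib] at ihx hshift ⊢
      rw [← add_assoc, ihx, hshift,
        show (x : ℚ) + 1 + y + a * (m + 1) = x + y + a * (m + 1) + 1 by ring,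
        Ring.choose_succ_succ, show (x : ℚ) + a + y + a * m = x + y + a * (m + 1) by ring,
        add_comm]

noncomputable def fussCatalan (h n : ℕ) : ℚ :=
  1 / ((h : ℚ) * n + 1) * ((h + 1) * n).choose n

theorem rotheCoeff_one (h n : ℕ) : rotheCoeff (h + 1) n 1 = fussCatalan h n := by
  cases n with
  | zero => simp [fussCatalan]
  | succ n =>
    have hchoose := Nat.choose_succ_right_eq ((h + 1) * (n + 1)) n
    rw [show (h + 1) * (n + 1) - n = h * (n + 1) + 1 by lia] at hchoose
    have hcast : (1 : ℚ) + ((h + 1 : ℕ) : ℚ) * (n + 1) - 1 = ((h + 1) * (n + 1) : ℕ) := by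
      push_cast
      ring
    rw [rotheCoeff, hcast, Ring.choose_natCast, fussCatalan]
    have hq := congrArg (Nat.cast : ℕ → ℚ) hchoose
    push_cast at hq
    field_simp
    push_cast
    linear_combination -hq

open Finset in
theorem sum_antidiagonal_fussCatalan_mul_choose (h m : ℕ) :
    ∑ p ∈ antidiagonal m, fussCatalan h p.1 * ((-1) ^ p.2 * (h * p.1).choose p.2) = 1 := by
  have hRH := sum_antidiagonal_rotheCoeff_mul_choose (h + 1) m 1 (-(h * m : ℚ) - 1)
  have hm : ((1 : ℕ) : ℚ) + (-(h * m : ℚ) - 1) + ((h + 1 : ℕ) : ℚ) * m = m := by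
    push_cast
    ring
  rw [hm, Ring.choose_natCast, Nat.choose_self, Nat.cast_one] at hRH
  refine (sum_congr rfl fun p hp => ?_).trans hRH
  rw [HasAntidiagonal.mem_antidiagonal] at hp
  rw [rotheCoeff_one, ← Ring.choose_natCast_sub_succ]
  congr 2
  rw [← hp]
  push_cast
  ring

theorem PowerSeries.coeff_one_sub_X_pow {R : Type*} [CommRing R] (n j : ℕ) :
    coeff j ((1 - X : R⟦X⟧) ^ n) = (-1) ^ j * n.choose j := by
  have hrescale : (1 - X : R⟦X⟧) = rescale (-1) (1 + X) := by
    rw [map_add, map_one, rescale_X, map_neg, map_one]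
    ring
  have hpoly : (1 + X : R⟦X⟧) ^ n = ((1 + Polynomial.X) ^ n : Polynomial R) := by
    push_cast
    rfl
  rw [hrescale, ← map_pow, coeff_rescale, hpoly, Polynomial.coeff_coe,
    Polynomial.coeff_one_add_X_pow]

theorem PowerSeries.coeff_X_mul_one_sub_X_pow_pow {R : Type*} [CommRing R] {h k m : ℕ}
    (hkm : k ≤ m) :
    coeff m ((X * (1 - X) ^ h : R⟦X⟧) ^ k) = (-1) ^ (m - k) * (h * k).choose (m - k) := by
  rw [mul_pow, ← pow_mul, mul_comm h, coeff_X_pow_mul', if_pos hkm, coeff_one_sub_X_pow]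

theorem pscomp_eq_subst {R : Type*} [CommRing R] (f g : R⟦X⟧) (hg : constantCoeff g = 0) :
    pscomp f g = f.subst g := by
  ext n
  obtain ⟨q, rfl⟩ := X_dvd_iff.mpr hg
  rw [pscomp, coeff_mk, coeff_subst' (HasSubst.of_constantCoeff_zero' hg),
    finsum_eq_sum_of_support_subset _ (s := Finset.range (n + 1)) ?_]
  · simp only [smul_eq_mul]
  · intro d hd
    rw [Function.mem_support, mul_pow, coeff_X_pow_mul'] at hd
    simp only [Finset.coe_range, Set.mem_Iio]
    by_contra hnd
    exact hd (by rw [if_neg (by omega), smul_zero])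

theorem pscomp_subst {R : Type*} [CommRing R] (f : R⟦X⟧) {g u : R⟦X⟧}
    (hg : constantCoeff g = 0) (hu : constantCoeff u = 0) :
    pscomp f (g.subst u) = (pscomp f g).subst u := by
  rw [pscomp_eq_subst _ _ (constantCoeff_subst_eq_zero hu _ hg), pscomp_eq_subst _ _ hg,
    subst_comp_subst_apply (.of_constantCoeff_zero' hg) (.of_constantCoeff_zero' hu)]

theorem coeff_genCatalanGF (h n : ℕ) :
    coeff n (genCatalanGF h) = Polynomial.C (fussCatalan h n) :=
  coeff_mk _ _

theorem pscomp_genCatalanGF_X_mul_one_sub_X_pow (h : ℕ) :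
    pscomp (genCatalanGF h) (X * (1 - X) ^ h) = mk 1 := by
  ext m : 1
  rw [pscomp, coeff_mk, coeff_mk, Pi.one_apply, ← Polynomial.C_1,
    ← sum_antidiagonal_fussCatalan_mul_choose h m,
    Finset.Nat.sum_antidiagonal_eq_sum_range_succ_mk, map_sum]
  refine Finset.sum_congr rfl fun k hk => ?_
  rw [coeff_genCatalanGF,
    coeff_X_mul_one_sub_X_pow_pow (Nat.lt_succ_iff.mp (Finset.mem_range.mp hk))]
  simp

theorem pscomp_genCatalanGF_mul_one_sub_pow_mul_one_sub (h : ℕ) {u : (Polynomial ℚ)⟦X⟧}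
    (hu : constantCoeff u = 0) :
    pscomp (genCatalanGF h) (u * (1 - u) ^ h) * (1 - u) = 1 := by
  let φ := substAlgHom (R := Polynomial ℚ) (HasSubst.of_constantCoeff_zero' hu)
  have hφX : φ X = u := substAlgHom_X _
  have hW : constantCoeff (X * (1 - X) ^ h : (Polynomial ℚ)⟦X⟧) = 0 := by simp
  calc pscomp (genCatalanGF h) (u * (1 - u) ^ h) * (1 - u)
      = pscomp (genCatalanGF h) (φ (X * (1 - X) ^ h)) * φ (1 - X) := by simp [φ, hφX]
    _ = φ (pscomp (genCatalanGF h) (X * (1 - X) ^ h) * (1 - X)) := by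
        rw [map_mul φ (pscomp _ _), coe_substAlgHom, pscomp_subst _ hW hu]
    _ = 1 := by rw [pscomp_genCatalanGF_X_mul_one_sub_X_pow, mk_one_mul_one_sub_eq_one, map_one]

/-- With `z = x (1 - g x^h)` (where `g` is a formal parameter), one has
`A_h(g z^h) = (1 - g x^h)⁻¹` and `z (A_h(g z^h) - 1) = g x^{h+1}`, as
identities of formal power series in `x` over `ℚ[g]`. -/
theorem genCatalanGF_parametric_general (h : ℕ) (hh : 0 < h) :
    pscomp (genCatalanGF h)
        (PowerSeries.C (R := Polynomial ℚ) Polynomial.X *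
          (PowerSeries.X *
            (1 - PowerSeries.C (R := Polynomial ℚ) Polynomial.X * PowerSeries.X ^ h)) ^ h) *
      (1 - PowerSeries.C (R := Polynomial ℚ) Polynomial.X * PowerSeries.X ^ h) = 1 ∧
    PowerSeries.X *
        (1 - PowerSeries.C (R := Polynomial ℚ) Polynomial.X * PowerSeries.X ^ h) *
        (pscomp (genCatalanGF h)
          (PowerSeries.C (R := Polynomial ℚ) Polynomial.X *
            (PowerSeries.X *
              (1 - PowerSeries.C (R := Polynomial ℚ) Polynomial.X * PowerSeries.X ^ h)) ^ h) - 1) =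
      PowerSeries.C (R := Polynomial ℚ) Polynomial.X * PowerSeries.X ^ (h + 1) := by
  have hu : constantCoeff (C Polynomial.X * X ^ h : (Polynomial ℚ)⟦X⟧) = 0 := by
    simp [hh.ne']
  have hinv := pscomp_genCatalanGF_mul_one_sub_pow_mul_one_sub h hu
  rw [mul_pow, ← mul_assoc]
  exact ⟨hinv, by linear_combination X * hinv⟩
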